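/- Let d ≥ 2 and set ν = d/2 − 1. There exists a constant C < ∞ depending only on d such that for all δ, y ∈ (0,1) and all u > δ: p^{(d)}(1,y;u) / p^{(d)}(1−δ,y;u) ≥ 1 − δ(1−y)/u − C·δ. -/

import Mathlib

open Real Set

/-- The modified Bessel function of the first kind,
`I_ν(z) = ∑_{m≥0} (z/2)^{2m+ν} / (m! Γ(m+ν+1))`. -/
noncomputable def besselI (ν z : ℝ) : ℝ :=
  ∑' m : ℕ, (z / 2) ^ (2 * (m : ℝ) + ν) / ((Nat.factorial m : ℝ) * Real.Gamma ((m : ℝ) + ν + 1))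

/-- The `d`-dimensional Bessel transition density (with `ν = d/2 − 1`):
`p^{(d)}(x,y;u) = (y/u) (y/x)^ν exp(−(x²+y²)/(2u)) I_ν(xy/u)`. -/
noncomputable def besselDensity (ν x y u : ℝ) : ℝ :=
  (y / u) * (y / x) ^ ν * Real.exp (-(x ^ 2 + y ^ 2) / (2 * u)) * besselI ν (x * y / u)

/-! Write `I_ν(z) = (z/2)^ν G(z)` with the entire even function `G(z) = ∑ c_m z^{2m}`. Termwise
AM-GM and an index shift give `z G ≤ (ν + 1) G + z G'`, so `e^{-z} z^{ν+1} G(z)`, that is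
`z e^{-z} I_ν(z)` up to a constant, is nondecreasing on `(0, ∞)`. With `a = y/u` and
`b = (1 - δ) a` this gives `I_ν(a) ≥ (1 - δ) e^{a - b} I_ν(b)`. In the ratio of densities the
factors `(y/x)^ν` contribute `(1 - δ)^ν` and the Gaussian factors `e^{-(2δ - δ²)/(2u)}`, so the
ratio is at least `(1 - δ)^{ν+1} e^{-δ(1-y)/u} ≥ 1 - δ(1-y)/u - (ν + 1)δ`, i.e. `C = d/2`. -/

open scoped Nat
open Filter

noncomputable def besselICoeff (ν : ℝ) (m : ℕ) : ℝ := 1 / (4 ^ m * m ! * Gamma (m + ν + 1))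

noncomputable def besselINormalized (ν z : ℝ) : ℝ := ∑' m : ℕ, besselICoeff ν m * z ^ (2 * m)

section
variable {ν : ℝ}

lemma besselICoeff_pos (hν : -1 < ν) (m : ℕ) : 0 < besselICoeff ν m := by
  have := Gamma_pos_of_pos (show 0 < (m : ℝ) + ν + 1 by linarith [m.cast_nonneg (α := ℝ)])
  unfold besselICoeff; positivity

lemma besselICoeff_eq_mul_succ (hν : -1 < ν) (m : ℕ) :
    besselICoeff ν m = 4 * (m + 1) * (m + ν + 1) * besselICoeff ν (m + 1) := by
  have hs : 0 < (m : ℝ) + ν + 1 := by linarith [m.cast_nonneg (α := ℝ)]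
  have hΓ := Gamma_pos_of_pos hs
  simp only [besselICoeff, pow_succ, Nat.factorial_succ, Nat.cast_mul, Nat.cast_succ,
    show ((m : ℝ) + 1 + ν + 1) = (m + ν + 1) + 1 by ring, Gamma_add_one hs.ne']
  field_simp

lemma summable_besselICoeff_mul_pow (hν : -1 < ν) (z : ℝ) :
    Summable fun m : ℕ => besselICoeff ν m * z ^ (2 * m) := by
  refine summable_of_ratio_norm_eventually_le (r := 1 / 2) (by norm_num) ?_
  filter_upwards [eventually_ge_atTop ⌈z ^ 2⌉₊, eventually_ge_atTop 1] with m hmz hm1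
  have hmz' : z ^ 2 ≤ m := Nat.ceil_le.mp hmz
  have hm1' : (1 : ℝ) ≤ m := by exact_mod_cast hm1
  have hc := besselICoeff_pos hν
  have hz (k : ℕ) : 0 ≤ z ^ (2 * k) := (even_two_mul k).pow_nonneg z
  rw [Real.norm_of_nonneg (mul_nonneg (hc _).le (hz _)),
    Real.norm_of_nonneg (mul_nonneg (hc _).le (hz _)), besselICoeff_eq_mul_succ hν m,
    show 2 * (m + 1) = 2 * m + 2 by ring, pow_add]
  have := hc (m + 1); have := hz m
  have : z ^ 2 ≤ 2 * ((m + 1) * (m + ν + 1)) := by nlinarith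
  calc besselICoeff ν (m + 1) * (z ^ (2 * m) * z ^ 2)
      ≤ besselICoeff ν (m + 1) * (z ^ (2 * m) * (2 * ((m + 1) * (m + ν + 1)))) := by gcongr
    _ = _ := by ring

lemma summable_natCast_mul_besselICoeff_mul_pow (hν : -1 < ν) (z : ℝ) :
    Summable fun m : ℕ => m * besselICoeff ν m * z ^ (2 * m) := by
  have hc := besselICoeff_pos hν
  have hz (m : ℕ) : 0 ≤ z ^ (2 * m) := (even_two_mul m).pow_nonneg z
  refine (summable_besselICoeff_mul_pow hν (2 * z)).of_nonneg_of_le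
    (fun m => by have := hc m; have := hz m; positivity) (fun m => ?_)
  have hm : (m : ℝ) ≤ 2 ^ (2 * m) := by
    exact_mod_cast (Nat.lt_two_pow_self.trans_le (Nat.pow_le_pow_right two_pos (by omega))).le
  rw [mul_pow, mul_comm (m : ℝ), mul_assoc]
  have := hc m; have := hz m
  gcongr

lemma besselINormalized_pos (hν : -1 < ν) (z : ℝ) : 0 < besselINormalized ν z :=
  (summable_besselICoeff_mul_pow hν z).tsum_pos
    (fun m => mul_nonneg (besselICoeff_pos hν m).le ((even_two_mul m).pow_nonneg z)) 0
    (by simpa using besselICoeff_pos hν 0)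

lemma hasDerivAt_besselINormalized (hν : -1 < ν) (z : ℝ) :
    HasDerivAt (besselINormalized ν)
      (∑' m : ℕ, besselICoeff ν m * (↑(2 * m) * z ^ (2 * m - 1))) z := by
  set R := |z| + 1
  have hR : 1 ≤ R := by simp [R]
  refine hasDerivAt_tsum_of_isPreconnected (g := fun m y => besselICoeff ν m * y ^ (2 * m))
    (g' := fun m y => besselICoeff ν m * (↑(2 * m) * y ^ (2 * m - 1)))
    ((summable_natCast_mul_besselICoeff_mul_pow hν R).mul_left 2) Metric.isOpen_ball
    (convex_ball 0 R).isPreconnected (fun m y _ => ((hasDerivAt_pow _ y).const_mul _))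
    (fun m y hy => ?_) (Metric.mem_ball_self (show (0:ℝ) < R by positivity))
    (summable_besselICoeff_mul_pow hν 0) (show z ∈ Metric.ball 0 R by simp [R])
  have hy : |y| ≤ R := (mem_ball_zero_iff.mp hy).le
  have hc := besselICoeff_pos hν m
  rw [norm_mul, norm_mul, norm_pow, Real.norm_of_nonneg hc.le, Real.norm_natCast]
  calc besselICoeff ν m * (↑(2 * m) * |y| ^ (2 * m - 1))
      ≤ besselICoeff ν m * (↑(2 * m) * R ^ (2 * m)) := by
        gcongr
        exact (pow_le_pow_left₀ (abs_nonneg y) hy _).trans (pow_le_pow_right₀ hR (by omega))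
    _ = 2 * (m * besselICoeff ν m * R ^ (2 * m)) := by push_cast; ring

lemma mul_deriv_besselINormalized (hν : -1 < ν) (z : ℝ) :
    z * deriv (besselINormalized ν) z = 2 * ∑' m : ℕ, m * besselICoeff ν m * z ^ (2 * m) := by
  rw [(hasDerivAt_besselINormalized hν z).deriv, ← tsum_mul_left, ← tsum_mul_left]
  congr 1 with m
  rcases m with _ | m
  · simp
  · rw [show 2 * (m + 1) = 2 * m + 1 + 1 by ring, Nat.add_sub_cancel, pow_succ]
    push_cast; ring

/-- AM-GM: `z^{2m+1} ≤ s z^{2m} + z^{2m+2}/(4s)` with `s = m + ν + 1`, then an index shift. -/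
lemma mul_besselINormalized_le (hν : -1 < ν) {z : ℝ} (hz : 0 ≤ z) :
    z * besselINormalized ν z
      ≤ (ν + 1) * besselINormalized ν z + 2 * ∑' m : ℕ, m * besselICoeff ν m * z ^ (2 * m) := by
  have hG := summable_besselICoeff_mul_pow hν z
  have hmG := summable_natCast_mul_besselICoeff_mul_pow hν z
  have hterm (m : ℕ) : z * (besselICoeff ν m * z ^ (2 * m))
      ≤ m * besselICoeff ν m * z ^ (2 * m) + (ν + 1) * (besselICoeff ν m * z ^ (2 * m))
        + ↑(m + 1) * besselICoeff ν (m + 1) * z ^ (2 * (m + 1)) := by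
    have hc := besselICoeff_pos hν (m + 1)
    have hzm := (even_two_mul m).pow_nonneg z
    rw [besselICoeff_eq_mul_succ hν m, show 2 * (m + 1) = 2 * m + 2 by ring, pow_add]
    push_cast
    have key : 0 ≤ (m + 1) * besselICoeff ν (m + 1) * z ^ (2 * m) * (2 * (m + ν + 1) - z) ^ 2 := by
      positivity
    linarith
  have hmG' : Summable fun m : ℕ => ↑(m + 1) * besselICoeff ν (m + 1) * z ^ (2 * (m + 1)) :=
    (summable_nat_add_iff 1).mpr hmG
  have hshift : ∑' m : ℕ, ↑(m + 1) * besselICoeff ν (m + 1) * z ^ (2 * (m + 1))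
      = ∑' m : ℕ, m * besselICoeff ν m * z ^ (2 * m) := by
    simp [hmG.tsum_eq_zero_add]
  calc z * besselINormalized ν z
      = ∑' m : ℕ, z * (besselICoeff ν m * z ^ (2 * m)) := tsum_mul_left.symm
    _ ≤ _ := (hG.mul_left z).tsum_le_tsum hterm ((hmG.add (hG.mul_left _)).add hmG')
    _ = _ := by
        rw [(hmG.add (hG.mul_left _)).tsum_add hmG', hmG.tsum_add (hG.mul_left _), tsum_mul_left,
          hshift, besselINormalized]
        ring

lemma monotoneOn_exp_neg_mul_rpow_mul_besselINormalized (hν : -1 < ν) :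
    MonotoneOn (fun z => exp (-z) * z ^ (ν + 1) * besselINormalized ν z) (Ioi 0) := by
  have hderiv (z : ℝ) (hz : 0 < z) :
      HasDerivAt (fun z => exp (-z) * z ^ (ν + 1) * besselINormalized ν z)
      (exp (-z) * z ^ ν * ((ν + 1) * besselINormalized ν z - z * besselINormalized ν z
        + z * deriv (besselINormalized ν) z)) z := by
    refine ((((hasDerivAt_neg z).exp).fun_mul
      (hasDerivAt_rpow_const (p := ν + 1) (Or.inl hz.ne'))).fun_mul
      (hasDerivAt_besselINormalized hν z).differentiableAt.hasDerivAt).congr_deriv ?_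
    rw [add_sub_cancel_right, rpow_add_one hz.ne']
    ring
  refine monotoneOn_of_hasDerivWithinAt_nonneg (convex_Ioi 0)
    (fun z hz => (hderiv z hz).continuousAt.continuousWithinAt)
    (fun z hz => (hderiv z (interior_subset hz)).hasDerivWithinAt) (fun z hz => ?_)
  rw [interior_Ioi] at hz
  have := mul_besselINormalized_le hν hz.out.le
  rw [← mul_deriv_besselINormalized hν] at this
  have := rpow_pos_of_pos hz.out ν
  have := exp_pos (-z)
  have : 0 ≤ (ν + 1) * besselINormalized ν z - z * besselINormalized ν z
        + z * deriv (besselINormalized ν) z := by linarith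
  positivity

lemma besselI_eq_rpow_mul_besselINormalized {z : ℝ} (hz : 0 < z) :
    besselI ν z = (z / 2) ^ ν * besselINormalized ν z := by
  rw [besselI, besselINormalized, ← tsum_mul_left]
  congr 1 with m
  rw [rpow_add (by positivity), show 2 * (m : ℝ) = ↑(2 * m) by push_cast; ring, rpow_natCast,
    besselICoeff, div_pow, pow_mul 2, show (2 : ℝ) ^ 2 = 4 by norm_num]
  ring

lemma besselI_pos (hν : -1 < ν) {z : ℝ} (hz : 0 < z) : 0 < besselI ν z := by
  rw [besselI_eq_rpow_mul_besselINormalized hz]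
  have := besselINormalized_pos hν z
  positivity

lemma monotoneOn_mul_exp_neg_mul_besselI (hν : -1 < ν) :
    MonotoneOn (fun z => z * exp (-z) * besselI ν z) (Ioi 0) := by
  have hscale {z : ℝ} (hz : 0 < z) : z * exp (-z) * besselI ν z
      = (2 ^ ν)⁻¹ * (exp (-z) * z ^ (ν + 1) * besselINormalized ν z) := by
    rw [besselI_eq_rpow_mul_besselINormalized hz, div_rpow hz.le zero_le_two, rpow_add_one hz.ne']
    ring
  intro a (ha : 0 < a) b (hb : 0 < b) hab
  simp only [hscale ha, hscale hb]
  exact mul_le_mul_of_nonneg_left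
    (monotoneOn_exp_neg_mul_rpow_mul_besselINormalized hν ha hb hab) (by positivity)

lemma mul_exp_sub_mul_besselI_le (hν : -1 < ν) {a b : ℝ} (hb : 0 < b) (hba : b ≤ a) :
    b * exp (a - b) * besselI ν b ≤ a * besselI ν a := by
  have hmono := monotoneOn_mul_exp_neg_mul_besselI hν hb (hb.trans_le hba) hba
  have hexp : exp a * exp (-a) = 1 := by rw [← exp_add, add_neg_cancel, exp_zero]
  calc b * exp (a - b) * besselI ν b = exp a * (b * exp (-b) * besselI ν b) := by
        rw [sub_eq_add_neg, exp_add]; ring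
    _ ≤ exp a * (a * exp (-a) * besselI ν a) := by gcongr
    _ = a * besselI ν a := by linear_combination (a * besselI ν a) * hexp

lemma besselDensity_pos (hν : -1 < ν) {x y u : ℝ} (hx : 0 < x) (hy : 0 < y) (hu : 0 < u) :
    0 < besselDensity ν x y u := by
  have := besselI_pos hν (show 0 < x * y / u by positivity)
  unfold besselDensity
  positivity

lemma one_sub_rpow_mul_exp_mul_besselDensity_le (hν : -1 < ν) {δ y u : ℝ} (hδ0 : 0 < δ)
    (hδ1 : δ < 1) (hy : 0 < y) (hu : 0 < u) :
    (1 - δ) ^ (ν + 1) * exp (-(δ * (1 - y) / u)) * besselDensity ν (1 - δ) y u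
      ≤ besselDensity ν 1 y u := by
  have hδ : 0 < 1 - δ := by linarith
  have hbessel : (1 - δ) * exp (1 * y / u - (1 - δ) * y / u) * besselI ν ((1 - δ) * y / u)
      ≤ besselI ν (1 * y / u) := by
    have := mul_exp_sub_mul_besselI_le hν (show 0 < (1 - δ) * y / u by positivity)
      (show (1 - δ) * y / u ≤ 1 * y / u by gcongr; linarith)
    refine le_of_mul_le_mul_left ?_ (show 0 < 1 * y / u by positivity)
    linear_combination this
  have hexp : exp (-(δ * (1 - y) / u)) * exp (-((1 - δ) ^ 2 + y ^ 2) / (2 * u))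
      ≤ exp (1 * y / u - (1 - δ) * y / u) * exp (-(1 ^ 2 + y ^ 2) / (2 * u)) := by
    rw [← exp_add, ← exp_add, exp_le_exp, ← sub_nonneg]
    have : 1 * y / u - (1 - δ) * y / u + -(1 ^ 2 + y ^ 2) / (2 * u)
        - (-(δ * (1 - y) / u) + -((1 - δ) ^ 2 + y ^ 2) / (2 * u)) = δ ^ 2 / (2 * u) := by
      field_simp; ring
    rw [this]; positivity
  have := besselI_pos hν (show 0 < (1 - δ) * y / u by positivity)
  calc (1 - δ) ^ (ν + 1) * exp (-(δ * (1 - y) / u)) * besselDensity ν (1 - δ) y u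
      = y / u * y ^ ν * (exp (-(δ * (1 - y) / u)) * exp (-((1 - δ) ^ 2 + y ^ 2) / (2 * u)))
          * ((1 - δ) * besselI ν ((1 - δ) * y / u)) := by
        rw [besselDensity, div_rpow hy.le hδ.le, rpow_add_one hδ.ne']
        field_simp
    _ ≤ y / u * y ^ ν * (exp (1 * y / u - (1 - δ) * y / u) * exp (-(1 ^ 2 + y ^ 2) / (2 * u)))
          * ((1 - δ) * besselI ν ((1 - δ) * y / u)) := by gcongr
    _ = y / u * y ^ ν * exp (-(1 ^ 2 + y ^ 2) / (2 * u))
          * ((1 - δ) * exp (1 * y / u - (1 - δ) * y / u) * besselI ν ((1 - δ) * y / u)) := by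
        ring
    _ ≤ besselDensity ν 1 y u := by
        rw [besselDensity, div_one]; gcongr

end

lemma one_sub_sub_mul_le_rpow_mul_exp_neg {δ t K : ℝ} (hδ0 : 0 ≤ δ) (hδ1 : δ ≤ 1) (ht0 : 0 ≤ t)
    (ht1 : t ≤ 1) (hK : 1 ≤ K) : 1 - t - K * δ ≤ (1 - δ) ^ K * exp (-t) := by
  have hbernoulli : 1 - K * δ ≤ (1 - δ) ^ K := by
    simpa [← sub_eq_add_neg] using one_add_mul_self_le_rpow_one_add (neg_le_neg hδ1) hK
  have hexp : 1 - t ≤ exp (-t) := by linarith [add_one_le_exp (-t)]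
  calc 1 - t - K * δ ≤ (1 - K * δ) * (1 - t) := by nlinarith [mul_nonneg ht0 hδ0]
    _ ≤ (1 - δ) ^ K * exp (-t) :=
        mul_le_mul hbernoulli hexp (by linarith) (rpow_nonneg (by linarith) K)

/-- Lower bound for the ratio of Bessel transition densities with
shifted starting point: for `d ≥ 2`, `ν = d/2 − 1`, there is `C < ∞` (depending only
on `d`) with `p^{(d)}(1,y;u)/p^{(d)}(1−δ,y;u) ≥ 1 − δ(1−y)/u − Cδ` for all
`δ, y ∈ (0,1)` and `u > δ`. -/
theorem besselDensity_ratio_lower_bound (d : ℝ) (hd : 2 ≤ d) :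
    ∃ C : ℝ, 0 ≤ C ∧
      ∀ δ ∈ Ioo (0 : ℝ) 1, ∀ y ∈ Ioo (0 : ℝ) 1, ∀ u : ℝ, δ < u →
        besselDensity (d / 2 - 1) 1 y u / besselDensity (d / 2 - 1) (1 - δ) y u
          ≥ 1 - δ * (1 - y) / u - C * δ := by
  refine ⟨d / 2, by positivity, fun δ ⟨hδ0, hδ1⟩ y ⟨hy0, hy1⟩ u hδu => ?_⟩
  have hu : 0 < u := hδ0.trans hδu
  have hν : -1 < d / 2 - 1 := by linarith
  have ht : δ * (1 - y) / u ≤ 1 := by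
    rw [div_le_one hu]; nlinarith
  have hp := besselDensity_pos hν (sub_pos.mpr hδ1) hy0 hu
  rw [ge_iff_le, le_div_iff₀ hp]
  calc (1 - δ * (1 - y) / u - d / 2 * δ) * besselDensity (d / 2 - 1) (1 - δ) y u
      ≤ (1 - δ) ^ (d / 2 - 1 + 1) * exp (-(δ * (1 - y) / u))
          * besselDensity (d / 2 - 1) (1 - δ) y u := by
        gcongr
        rw [sub_add_cancel]
        exact one_sub_sub_mul_le_rpow_mul_exp_neg hδ0.le hδ1.le
          (div_nonneg (by nlinarith) hu.le) ht (by linarith)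
    _ ≤ besselDensity (d / 2 - 1) 1 y u :=
        one_sub_rpow_mul_exp_mul_besselDensity_le hν hδ0 hδ1 hy0 hu
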